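/- arXiv:1809.03830 — 6 statements merged into one kernel-verified Lean document; each statement's English description precedes it below -/
import Mathlib

section
/- Let $R$ be a Dedekind domain of characteristic $0$ with fraction field $F$ and let $\mathfrak{A}$ be a Gorenstein $R$-order in a finite-dimensional separable commutative $F$-algebra $A$. Then every finitely generated $\mathfrak{A}$-module $X$ that is $R$-torsion-free is reflexive: the natural evaluation map $X \to \operatorname{Hom}_{\mathfrak{A}}(\operatorname{Hom}_{\mathfrak{A}}(X,\mathfrak{A}),\mathfrak{A})$ is bijective. -/
/-!
Injectivity: with `S` the image of `R ∖ {0}` in `𝔄`, the algebra `A` is the localization `S⁻¹𝔄`,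
and it is semisimple, being finite over `F` and reduced by separability. A torsion-free `X` embeds
into `A ⊗ X`, whose nonzero vectors are detected by `A`-linear functionals; since `X` is finitely
generated, multiplying such a functional by a suitable `s ∈ S` makes it `𝔄`-valued on `X`.

Surjectivity: choose a surjection `p : 𝔄ⁿ → X`. Its dual embeds `X*` into the free module
`(𝔄ⁿ)*` with an `R`-torsion-free cokernel (if `r • d` vanishes on `ker p` then so does `d`, as `𝔄`
is torsion-free). The Gorenstein hypothesis thus extends every `ξ : X* → 𝔄` to `(𝔄ⁿ)*`, where it
is evaluation at some `y ∈ 𝔄ⁿ`, so `ξ` is evaluation at `p y`.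
-/

open CategoryTheory Opposite Limits
open scoped TensorProduct

universe u

namespace CategoryTheory

variable {R : Type*} [Ring R] {C : Type*} [Category C] [Abelian C] [Linear R C]
  [EnoughProjectives C]

lemma ProjectiveResolution.exists_ι_comp_eq_of_subsingleton_ext {N B : C}
    (P : ProjectiveResolution N) (hN : Subsingleton (((Ext R C 1).obj (op N)).obj B))
    (φ : kernel (P.π.f 0) ⟶ B) :
    ∃ g : P.complex.X 0 ⟶ B, kernel.ι (P.π.f 0) ≫ g = φ := by
  let e : P.complex.X 1 ⟶ kernel (P.π.f 0) :=
    kernel.lift _ (P.complex.d 1 0) P.complex_d_comp_π_f_zero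
  have he : Epi e := P.exact₀.epi_kernelLift
  have hcocycle : P.complex.d 2 1 ≫ e ≫ φ = 0 := by
    have : P.complex.d 2 1 ≫ e = 0 := by
      ext
      simp only [e, Category.assoc, kernel.lift_ι, HomologicalComplex.d_comp_d, zero_comp]
    rw [reassoc_of% this, zero_comp]
  have hexact : ((P.complex.linearYonedaObj R B).sc' 0 1 2).Exact := by
    rw [← HomologicalComplex.exactAt_iff' _ 0 1 2 (by simp) (by simp),
      HomologicalComplex.exactAt_iff_isZero_homology]
    have : Subsingleton ((P.complex.linearYonedaObj R B).homology 1) :=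
      ((forget (ModuleCat R)).mapIso (P.isoExt 1 B)).toEquiv.symm.subsingleton
    exact ModuleCat.isZero_of_subsingleton _
  obtain ⟨g, hg⟩ : ∃ g : P.complex.X 0 ⟶ B, P.complex.d 1 0 ≫ g = e ≫ φ :=
    (ShortComplex.moduleCat_exact_iff _).1 hexact (e ≫ φ) hcocycle
  exact ⟨g, (cancel_epi e).1 (by simpa only [e, kernel.lift_ι_assoc] using hg)⟩

lemma ShortComplex.ShortExact.exists_f_comp_eq_of_subsingleton_ext {S : ShortComplex C}
    (hS : S.ShortExact) [Projective S.X₂] {B : C}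
    (hN : Subsingleton (((Ext R C 1).obj (Opposite.op S.X₃)).obj B)) (φ : S.X₁ ⟶ B) :
    ∃ g : S.X₂ ⟶ B, S.f ≫ g = φ := by
  have := hS.mono_f
  have := hS.epi_g
  let P := ProjectiveResolution.of S.X₃
  let ε : P.complex.X 0 ⟶ S.X₃ := P.π.f 0
  have : Epi ε := inferInstanceAs (Epi (P.π.f 0))
  -- Compare the two projective presentations `S.g` and `ε` of `S.X₃` (as in Schanuel's lemma).
  let α : S.X₂ ⟶ P.complex.X 0 := Projective.factorThru S.g ε
  let β : P.complex.X 0 ⟶ S.X₂ := Projective.factorThru ε S.g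
  let ρ : kernel ε ⟶ S.X₁ := hS.exact.lift (kernel.ι ε ≫ β) (by simp [β])
  let μ : S.X₂ ⟶ S.X₁ := hS.exact.lift (𝟙 _ - α ≫ β) (by simp [α, β])
  let κ : S.X₁ ⟶ kernel ε := kernel.lift ε (S.f ≫ α) (by simp [α])
  obtain ⟨h, hh⟩ : ∃ h, kernel.ι ε ≫ h = ρ ≫ φ :=
    P.exists_ι_comp_eq_of_subsingleton_ext hN (ρ ≫ φ)
  have hsplit : κ ≫ ρ + S.f ≫ μ = 𝟙 _ := by
    rw [← cancel_mono S.f]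
    simp [ρ, μ, κ]
  refine ⟨α ≫ h + μ ≫ φ, ?_⟩
  calc S.f ≫ (α ≫ h + μ ≫ φ)
      = (κ ≫ ρ + S.f ≫ μ) ≫ φ := by
        simp only [Preadditive.comp_add, Preadditive.add_comp, Category.assoc, ← hh, κ,
          kernel.lift_ι_assoc]
    _ = φ := by rw [hsplit, Category.id_comp]

end CategoryTheory

section ModuleExt

variable {R : Type u} [CommRing R]

lemma Function.Exact.exists_comp_eq_of_subsingleton_ext {K P N B : Type u}
    [AddCommGroup K] [Module R K] [AddCommGroup P] [Module R P] [Module.Projective R P]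
    [AddCommGroup N] [Module R N] [AddCommGroup B] [Module R B]
    {f : K →ₗ[R] P} {g : P →ₗ[R] N} (hfg : Function.Exact f g) (hf : Function.Injective f)
    (hg : Function.Surjective g)
    (hN : Subsingleton (((Ext R (ModuleCat.{u} R) 1).obj (op (ModuleCat.of R N))).obj
      (ModuleCat.of R B)))
    (φ : K →ₗ[R] B) : ∃ ψ : P →ₗ[R] B, ψ ∘ₗ f = φ := by
  let S := ModuleCat.shortComplexOfCompEqZero f g hfg.linearMap_comp_eq_zero
  have : Projective S.X₂ := (IsProjective.iff_projective P).1 ‹_›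
  obtain ⟨ψ, hψ⟩ := (ModuleCat.shortComplex_shortExact S hfg hf hg
    ).exists_f_comp_eq_of_subsingleton_ext hN (ModuleCat.ofHom φ)
  exact ⟨ψ.hom, congrArg ModuleCat.Hom.hom hψ⟩

theorem Module.Dual.eval_surjective_of_subsingleton_ext {M P : Type u}
    [AddCommGroup M] [Module R M] [AddCommGroup P] [Module R P] [Module.Free R P]
    [Module.Finite R P] {p : P →ₗ[R] M} (hp : Function.Surjective p)
    (hN : Subsingleton (((Ext R (ModuleCat.{u} R) 1).obj
      (op (ModuleCat.of R (Module.Dual R P ⧸ LinearMap.range p.dualMap)))).obj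
        (ModuleCat.of R R))) :
    Function.Surjective (Module.Dual.eval R M) := by
  intro ξ
  obtain ⟨g, hg⟩ := p.dualMap.exact_map_mkQ_range.exists_comp_eq_of_subsingleton_ext
    (LinearMap.dualMap_injective_of_surjective hp) (Submodule.mkQ_surjective _) hN ξ
  obtain ⟨y, rfl⟩ := (Module.bijective_dual_eval R P).2 g
  exact ⟨p y, LinearMap.ext fun f => LinearMap.congr_fun hg f⟩

end ModuleExt

theorem Module.isTorsionFree_quotient_range_dualMap {R 𝔄 M P : Type*} [CommSemiring R]
    [CommRing 𝔄] [Algebra R 𝔄] [Module.IsTorsionFree R 𝔄]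
    [AddCommGroup M] [Module 𝔄 M] [AddCommGroup P] [Module 𝔄 P]
    {p : P →ₗ[𝔄] M} (hp : Function.Surjective p) :
    Module.IsTorsionFree R (Module.Dual 𝔄 P ⧸ LinearMap.range p.dualMap) := by
  refine ⟨fun r hr => ?_⟩
  refine .of_right_eq_zero_of_smul fun q hq => ?_
  obtain ⟨d, rfl⟩ := Submodule.Quotient.mk_surjective _ q
  rw [← Submodule.Quotient.mk_smul] at hq
  rw [Submodule.Quotient.mk_eq_zero,
    LinearMap.range_dualMap_eq_dualAnnihilator_ker_of_surjective _ hp,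
    Submodule.mem_dualAnnihilator] at hq ⊢
  exact fun x hx => (hr.isSMulRegular : IsSMulRegular 𝔄 r).right_eq_zero_of_smul (hq x hx)

theorem IsLocalization.exists_algebraMap_comp_eq_smul {R L M : Type*} [CommRing R] [CommRing L]
    [Algebra R L] (S : Submonoid R) [IsLocalization S L]
    (hinj : Function.Injective (algebraMap R L)) [AddCommGroup M] [Module R M]
    [Module.Finite R M] (f : M →ₗ[R] L) :
    ∃ s : S, ∃ g : M →ₗ[R] R, Algebra.linearMap R L ∘ₗ g = (s : R) • f := by
  obtain ⟨T, hT⟩ := Module.Finite.fg_top (R := R) (M := M)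
  obtain ⟨s, hs⟩ := IsLocalization.exist_integer_multiples S T f
  have hrange : LinearMap.range ((s : R) • f) ≤ LinearMap.range (Algebra.linearMap R L) := by
    rw [LinearMap.range_eq_map, ← hT, Submodule.map_span_le]
    intro m hm
    obtain ⟨a, ha⟩ := hs m hm
    exact ⟨a, ha⟩
  let e := LinearEquiv.ofInjective (Algebra.linearMap R L) hinj
  refine ⟨s, e.symm.toLinearMap ∘ₗ ((s : R) • f).codRestrict _ fun m => hrange ⟨m, rfl⟩,
    ?_⟩
  ext m
  exact congrArg Subtype.val (e.apply_symm_apply _)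

theorem Module.Dual.eval_injective_of_isLocalization {R L M : Type*} [CommRing R] [CommRing L]
    [Algebra R L] (S : Submonoid R) [IsLocalization S L] [IsSemisimpleRing L]
    (hinj : Function.Injective (algebraMap R L)) [AddCommGroup M] [Module R M]
    [Module.Finite R M] (hM : ∀ s ∈ S, IsSMulRegular M s) :
    Function.Injective (Module.Dual.eval R M) := by
  have := Module.projective_of_isSemisimpleRing L (L ⊗[R] M)
  rw [injective_iff_map_eq_zero]
  intro x hx
  let ι := TensorProduct.mk R L M 1
  suffices ι x = 0 by
    obtain ⟨s, hs⟩ := (IsLocalizedModule.eq_zero_iff S ι).1 this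
    exact (hM s s.2).right_eq_zero_of_smul hs
  refine (Module.forall_dual_apply_eq_zero_iff L (ι x)).1 fun φ => ?_
  obtain ⟨s, g, hg⟩ :=
    IsLocalization.exists_algebraMap_comp_eq_smul S hinj (φ.restrictScalars R ∘ₗ ι)
  have hgx : algebraMap R L (g x) = (s : R) • φ (ι x) := LinearMap.congr_fun hg x
  rw [show g x = 0 from LinearMap.congr_fun hx g, map_zero, Algebra.smul_def] at hgx
  exact ((IsLocalization.map_units L s).mul_right_eq_zero).1 hgx.symm

theorem IsLocalization.of_span_eq_top {R F A 𝔄 : Type*} [CommRing R] [CommRing F] [Algebra R F]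
    (M : Submonoid R) [IsLocalization M F] [CommRing A] [Algebra F A] [Algebra R A]
    [IsScalarTower R F A] [CommRing 𝔄] [Algebra R 𝔄] [Algebra 𝔄 A] [IsScalarTower R 𝔄 A]
    (hinj : Function.Injective (algebraMap 𝔄 A))
    (hspan : Submodule.span F (Set.range (algebraMap 𝔄 A)) = ⊤) :
    IsLocalization (Algebra.algebraMapSubmonoid 𝔄 M) A where
  map_units := by
    rintro ⟨_, r, hr, rfl⟩
    rw [← IsScalarTower.algebraMap_apply, IsScalarTower.algebraMap_apply R F A]
    exact (IsLocalization.map_units F ⟨r, hr⟩).map _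
  surj a := by
    obtain ⟨y, hy, z, rfl⟩ :=
      (IsLocalization.mem_span_iff M).1 (hspan ▸ Submodule.mem_top (x := a))
    have hle : Submodule.span R (Set.range (algebraMap 𝔄 A)) ≤
        LinearMap.range (IsScalarTower.toAlgHom R 𝔄 A).toLinearMap :=
      Submodule.span_le.2 (by rintro _ ⟨b, rfl⟩; exact ⟨b, rfl⟩)
    obtain ⟨b, rfl⟩ : ∃ b, algebraMap 𝔄 A b = y := hle hy
    refine ⟨⟨b, ⟨algebraMap R 𝔄 z, z, z.2, rfl⟩⟩, ?_⟩
    rw [← IsScalarTower.algebraMap_apply, IsScalarTower.algebraMap_apply R F A, Algebra.smul_def,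
      mul_right_comm, ← map_mul, IsLocalization.mk'_spec, map_one, map_one, one_mul]
  exists_of_eq h := ⟨1, by rw [hinj h]⟩

theorem isReduced_of_isSeparable (F A : Type*) [Field F] [CommRing A] [Algebra F A]
    [Algebra.IsSeparable F A] : IsReduced A := by
  refine ⟨fun a ⟨m, hm⟩ => ?_⟩
  rcases Nat.eq_zero_or_pos m with rfl | hm0
  · have : Subsingleton A := subsingleton_of_zero_eq_one (by simpa using hm.symm)
    exact Subsingleton.elim a 0
  have hdvd : minpoly F a ∣ Polynomial.X ^ m := minpoly.dvd F a (by simp [hm])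
  obtain ⟨q, hq⟩ :=
    ((Algebra.IsSeparable.isSeparable F a).squarefree.dvd_pow_iff_dvd hm0.ne').1 hdvd
  simpa [minpoly.aeval] using congrArg (Polynomial.aeval a) hq

theorem isSemisimpleRing_of_isSeparable (F A : Type*) [Field F] [CommRing A] [Algebra F A]
    [FiniteDimensional F A] [Algebra.IsSeparable F A] : IsSemisimpleRing A :=
  have : IsArtinianRing A := isArtinian_of_tower F inferInstance
  have := isReduced_of_isSeparable F A
  IsArtinianRing.isSemisimpleRing_of_isReduced A

theorem gorenstein_order_torsionFree_reflexive_general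
    (R : Type u) [CommRing R] [IsDedekindDomain R]
    (F : Type u) [Field F] [Algebra R F] [IsFractionRing R F]
    (A : Type u) [CommRing A] [Algebra F A] [FiniteDimensional F A] [Algebra.IsSeparable F A]
    [Algebra R A] [IsScalarTower R F A]
    (𝔄 : Type u) [CommRing 𝔄] [Algebra R 𝔄]
    [Algebra 𝔄 A] [IsScalarTower R 𝔄 A]
    (hinj : Function.Injective (algebraMap 𝔄 A))
    (hspan : Submodule.span F (Set.range (algebraMap 𝔄 A)) = ⊤)
    (hGor : ∀ (N : Type u) [AddCommGroup N] [Module 𝔄 N] [Module R N] [IsScalarTower R 𝔄 N],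
      Module.Finite 𝔄 N → (∀ (r : R) (n : N), r • n = 0 → r = 0 ∨ n = 0) →
      Subsingleton (((Ext 𝔄 (ModuleCat.{u} 𝔄) 1).obj (op (ModuleCat.of 𝔄 N))).obj
        (ModuleCat.of 𝔄 𝔄)))
    (X : Type u) [AddCommGroup X] [Module 𝔄 X] [Module R X] [IsScalarTower R 𝔄 X]
    [Module.Finite 𝔄 X]
    (hXtf : ∀ (r : R) (x : X), r • x = 0 → r = 0 ∨ x = 0) :
    Function.Bijective (Module.Dual.eval 𝔄 X) := by
  have : Module.IsTorsionFree R A := .trans_faithfulSMul R F A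
  have : Module.IsTorsionFree R 𝔄 := hinj.moduleIsTorsionFree _ fun r a => by
    simp [Algebra.smul_def, IsScalarTower.algebraMap_apply R 𝔄 A]
  have : Module.IsTorsionFree R X := .of_smul_eq_zero hXtf
  have := IsLocalization.of_span_eq_top (nonZeroDivisors R) hinj hspan
  have := isSemisimpleRing_of_isSeparable F A
  refine ⟨Module.Dual.eval_injective_of_isLocalization
    (Algebra.algebraMapSubmonoid 𝔄 (nonZeroDivisors R)) hinj ?_, ?_⟩
  · rintro _ ⟨r, hr, rfl⟩
    exact (isSMulRegular_algebraMap_iff 𝔄).2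
      (isRegular_iff_mem_nonZeroDivisors.2 hr).isSMulRegular
  · obtain ⟨n, p, hp⟩ := Module.Finite.exists_fin' 𝔄 X
    have := Module.isTorsionFree_quotient_range_dualMap (R := R) hp
    exact Module.Dual.eval_surjective_of_subsingleton_ext hp
      (hGor _ inferInstance (Module.isTorsionFree_iff_smul_eq_zero.1 this))

/-- Let `R` be a Dedekind domain of characteristic `0` with fraction field
`F` and let `𝔄` be a Gorenstein `R`-order in a finite-dimensional separable commutative
`F`-algebra `A` (Gorenstein meaning that `Ext¹_𝔄(N, 𝔄) = 0` for every finitely generated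
`R`-torsion-free `𝔄`-module `N`). Then every finitely generated `𝔄`-module `X` that is
`R`-torsion-free is reflexive: the natural evaluation map
`X → Hom_𝔄(Hom_𝔄(X, 𝔄), 𝔄)` is bijective. -/
theorem gorenstein_order_torsionFree_reflexive
    (R : Type u) [CommRing R] [IsDedekindDomain R] [CharZero R]
    (F : Type u) [Field F] [Algebra R F] [IsFractionRing R F]
    (A : Type u) [CommRing A] [Algebra F A] [FiniteDimensional F A] [Algebra.IsSeparable F A]
    [Algebra R A] [IsScalarTower R F A]
    (𝔄 : Type u) [CommRing 𝔄] [Algebra R 𝔄] [Module.Finite R 𝔄]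
    [Algebra 𝔄 A] [IsScalarTower R 𝔄 A]
    (hinj : Function.Injective (algebraMap 𝔄 A))
    (hspan : Submodule.span F (Set.range (algebraMap 𝔄 A)) = ⊤)
    (hGor : ∀ (N : Type u) [AddCommGroup N] [Module 𝔄 N] [Module R N] [IsScalarTower R 𝔄 N],
      Module.Finite 𝔄 N → (∀ (r : R) (n : N), r • n = 0 → r = 0 ∨ n = 0) →
      Subsingleton (((Ext 𝔄 (ModuleCat.{u} 𝔄) 1).obj (op (ModuleCat.of 𝔄 N))).obj
        (ModuleCat.of 𝔄 𝔄)))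
    (X : Type u) [AddCommGroup X] [Module 𝔄 X] [Module R X] [IsScalarTower R 𝔄 X]
    [Module.Finite 𝔄 X]
    (hXtf : ∀ (r : R) (x : X), r • x = 0 → r = 0 ∨ x = 0) :
    Function.Bijective (Module.Dual.eval 𝔄 X) :=
  gorenstein_order_torsionFree_reflexive_general R F A 𝔄 hinj hspan hGor X hXtf
end

section
/- Let $R$ be a Dedekind domain of characteristic $0$ with fraction field $F$, let $\mathfrak{A}$ be a Gorenstein $R$-order in a finite-dimensional separable commutative $F$-algebra $A$, let $e$ be an idempotent of $A$, and let $X$ be a finitely generated $\mathfrak{A}$-module. Then the map sending $\theta$ to $\theta\circ\pi$, where $\pi: X \to Xe$ is $x\mapsto xe$ (computed in $F\otimes_R X$), induces an isomorphism of $\mathfrak{A}$-modules $(Xe)^* \cong (X^*)^e$, where $(X^*)^e := \{\theta \in X^* : \theta(x) = e\cdot\theta(x) \text{ for all } x\in X\}$. -/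
open CategoryTheory Opposite

universe u

section

variable (𝔄 A : Type u) [CommRing 𝔄] [CommRing A] [Algebra 𝔄 A]
variable (V : Type u) [AddCommGroup V] [Module A V] [Module 𝔄 V] [IsScalarTower 𝔄 A V]

/-- Multiplication by an element `e` of `A` on an `A`-module `V`, as an `𝔄`-linear map. -/
noncomputable def mulByE (e : A) : V →ₗ[𝔄] V :=
  (LinearMap.lsmul A V e).restrictScalars 𝔄

variable (e : A) (X : Submodule 𝔄 V)

/-- The image `Xe` of a lattice `X` under multiplication by `e`. -/
noncomputable def latticeE : Submodule 𝔄 V := X.map (mulByE 𝔄 A V e)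

/-- The projection `π : X → Xe`, `x ↦ e • x`. -/
noncomputable def projE : X →ₗ[𝔄] (latticeE 𝔄 A V e X) :=
  (mulByE 𝔄 A V e).restrict fun x hx => Submodule.mem_map_of_mem hx

lemma projE_apply' (x : X) : (projE 𝔄 A V e X x : V) = e • (x : V) := rfl

lemma projE_surjective' : Function.Surjective (projE 𝔄 A V e X) := by
  rintro ⟨v, hv⟩
  obtain ⟨x, hx, rfl⟩ := hv
  exact ⟨⟨x, hx⟩, rfl⟩

lemma latticeE_idem_smul (he : IsIdempotentElem e) (u : latticeE 𝔄 A V e X) :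
    e • (u : V) = (u : V) := by
  obtain ⟨x, hx, hxu⟩ := u.2
  rw [← hxu]
  show e • (e • x) = e • x
  rw [smul_smul, he]

end

/-- Let `R` be a Dedekind domain of characteristic `0` with fraction field
`F`, let `𝔄` be a Gorenstein `R`-order in a finite-dimensional separable commutative
`F`-algebra `A`, let `e` be an idempotent of `A`, and let `X` be a finitely generated
`𝔄`-lattice (realised as a finitely generated `𝔄`-submodule of an `A`-module `V` which is an
`F`-vector space). Then the map sending `θ` to `θ ∘ π`, where `π : X → Xe` is `x ↦ e • x`,
identifies `(Xe)^* = Hom_𝔄(Xe, 𝔄)` with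
`(X^*)ᵉ = {θ ∈ Hom_𝔄(X, 𝔄) : θ(x) = e • θ(x) for all x}`: it is injective with image exactly
`(X^*)ᵉ`. -/
theorem dual_of_e_multiple_lattice
    (R : Type u) [CommRing R] [IsDedekindDomain R] [CharZero R]
    (F : Type u) [Field F] [Algebra R F] [IsFractionRing R F]
    (A : Type u) [CommRing A] [Algebra F A] [FiniteDimensional F A] [Algebra.IsSeparable F A]
    [Algebra R A] [IsScalarTower R F A]
    (𝔄 : Type u) [CommRing 𝔄] [Algebra R 𝔄] [Module.Finite R 𝔄]
    [Algebra 𝔄 A] [IsScalarTower R 𝔄 A]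
    (hinj : Function.Injective (algebraMap 𝔄 A))
    (hspan : Submodule.span F (Set.range (algebraMap 𝔄 A)) = ⊤)
    (hGor : ∀ (N : Type u) [AddCommGroup N] [Module 𝔄 N] [Module R N] [IsScalarTower R 𝔄 N],
      Module.Finite 𝔄 N → (∀ (r : R) (n : N), r • n = 0 → r = 0 ∨ n = 0) →
      Subsingleton (((Ext 𝔄 (ModuleCat.{u} 𝔄) 1).obj (op (ModuleCat.of 𝔄 N))).obj
        (ModuleCat.of 𝔄 𝔄)))
    (e : A) (he : IsIdempotentElem e)
    (V : Type u) [AddCommGroup V] [Module A V] [Module F V] [IsScalarTower F A V]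
    [Module 𝔄 V] [IsScalarTower 𝔄 A V] [Module R V] [IsScalarTower R F V]
    [IsScalarTower R 𝔄 V]
    (X : Submodule 𝔄 V) (hXfg : X.FG) :
    Function.Injective
      (fun θ : (latticeE 𝔄 A V e X) →ₗ[𝔄] 𝔄 => θ ∘ₗ projE 𝔄 A V e X) ∧
    Set.range (fun θ : (latticeE 𝔄 A V e X) →ₗ[𝔄] 𝔄 => θ ∘ₗ projE 𝔄 A V e X) =
      {φ : X →ₗ[𝔄] 𝔄 | ∀ x : X,
        e * algebraMap 𝔄 A (φ x) = algebraMap 𝔄 A (φ x)} := by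
  classical
  -- clear denominators: find `t b : 𝔄` with `alg t * e = alg b` and `alg t` a unit
  obtain ⟨t, b, htu, htb⟩ : ∃ t b : 𝔄, IsUnit (algebraMap 𝔄 A t) ∧
      algebraMap 𝔄 A t * e = algebraMap 𝔄 A b := by
    have he' : e ∈ Submodule.span F (Set.range (algebraMap 𝔄 A)) := by
      rw [hspan]; trivial
    rw [Finsupp.mem_span_range_iff_exists_finsupp] at he'
    obtain ⟨c, hc⟩ := he'
    obtain ⟨d, hd⟩ := IsLocalization.exist_integer_multiples (nonZeroDivisors R) c.support c
    choose s hs using hd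
    refine ⟨algebraMap R 𝔄 (d : R),
      ∑ i ∈ c.support.attach, s i.1 i.2 • i.1, ?_, ?_⟩
    · have hd0 : algebraMap R F (d : R) ≠ 0 := by
        have := nonZeroDivisors.coe_ne_zero d
        simpa [map_eq_zero_iff _ (IsFractionRing.injective R F)] using this
      have : algebraMap 𝔄 A (algebraMap R 𝔄 (d : R))
          = algebraMap F A (algebraMap R F (d : R)) := by
        rw [← IsScalarTower.algebraMap_apply, IsScalarTower.algebraMap_apply R F A]
      rw [this]
      exact (isUnit_iff_ne_zero.mpr hd0).map (algebraMap F A)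
    · have h1 : algebraMap 𝔄 A (algebraMap R 𝔄 (d : R)) * e
          = (algebraMap R F (d : R)) • e := by
        rw [← IsScalarTower.algebraMap_apply, IsScalarTower.algebraMap_apply R F A,
          Algebra.smul_def]
      rw [h1, ← hc, Finsupp.sum, Finset.smul_sum, map_sum]
      rw [← Finset.sum_attach c.support
        (fun i => algebraMap R F (d : R) • c i • algebraMap 𝔄 A i)]
      refine Finset.sum_congr rfl fun i _ => ?_
      rw [smul_smul, ← Algebra.smul_def, ← hs i.1 i.2, algebraMap_smul,
        ← IsScalarTower.coe_toAlgHom' R 𝔄 A, ← map_smul]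
  set π := projE 𝔄 A V e X with hπ
  -- key fact 1: forward inclusion
  have hkey1 : ∀ (θ : (latticeE 𝔄 A V e X) →ₗ[𝔄] 𝔄) (u : latticeE 𝔄 A V e X),
      e * algebraMap 𝔄 A (θ u) = algebraMap 𝔄 A (θ u) := by
    intro θ u
    have hbu : b • u = t • u := by
      apply Subtype.ext
      show b • (u : V) = t • (u : V)
      rw [← algebraMap_smul A b (u : V), ← algebraMap_smul A t (u : V), ← htb, mul_smul,
        latticeE_idem_smul 𝔄 A V e X he u]
    have : algebraMap 𝔄 A b * algebraMap 𝔄 A (θ u)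
        = algebraMap 𝔄 A t * algebraMap 𝔄 A (θ u) := by
      rw [← map_mul, ← map_mul, ← smul_eq_mul, ← θ.map_smul, hbu, θ.map_smul, smul_eq_mul]
    apply htu.mul_left_cancel
    rw [← mul_assoc, htb, this]
  -- key fact 2: if `φ` is in the e-part and `e • x = 0` then `φ x = 0`
  have hkey2 : ∀ (φ : X →ₗ[𝔄] 𝔄), (∀ x : X,
      e * algebraMap 𝔄 A (φ x) = algebraMap 𝔄 A (φ x)) →
      ∀ x : X, e • (x : V) = 0 → φ x = 0 := by
    intro φ hφ x hx
    have hbx : b • x = (0 : X) := by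
      apply Subtype.ext
      show b • (x : V) = 0
      rw [← algebraMap_smul A b (x : V), ← htb, mul_smul, hx, smul_zero]
    have h0 : algebraMap 𝔄 A b * algebraMap 𝔄 A (φ x) = 0 := by
      rw [← map_mul, ← smul_eq_mul, ← φ.map_smul, hbx, map_zero, map_zero]
    rw [← htb, mul_assoc, hφ x] at h0
    have : algebraMap 𝔄 A (φ x) = 0 := htu.mul_left_cancel (by rw [h0, mul_zero])
    apply hinj
    rw [this, map_zero]
  constructor
  · intro θ₁ θ₂ h
    ext u
    obtain ⟨x, rfl⟩ := projE_surjective' 𝔄 A V e X u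
    exact LinearMap.congr_fun h x
  · ext φ
    constructor
    · rintro ⟨θ, rfl⟩ x
      exact hkey1 θ (π x)
    · intro hφ
      have hle : LinearMap.ker π ≤ LinearMap.ker φ := by
        intro x hx
        have h0 : e • (x : V) = 0 := by
          have := congrArg Subtype.val (LinearMap.mem_ker.mp hx)
          simpa [hπ, projE_apply'] using this
        exact LinearMap.mem_ker.mpr (hkey2 φ hφ x h0)
      let eqv := LinearMap.quotKerEquivOfSurjective π (projE_surjective' 𝔄 A V e X)
      refine ⟨(Submodule.liftQ (LinearMap.ker π) φ hle) ∘ₗ (eqv.symm : _ →ₗ[𝔄] _), ?_⟩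
      ext x
      have h1 : eqv (Submodule.Quotient.mk x) = π x := by
        simp [eqv, LinearMap.quotKerEquivOfSurjective]
      have h2 : eqv.symm (π x) = Submodule.Quotient.mk x := by
        rw [LinearEquiv.symm_apply_eq, h1]
      simp only [LinearMap.coe_comp, Function.comp_apply, LinearMap.coe_restrictScalars,
        LinearEquiv.coe_coe]
      rw [h2, Submodule.liftQ_apply]
end

section
/- Let $R$ be a Dedekind domain of characteristic $0$ with fraction field $F$ and let $\mathfrak{A}$ be a Gorenstein $R$-order in a finite-dimensional separable commutative $F$-algebra. Then every short exact sequence of finitely generated $\mathfrak{A}$-modules $0 \to P \to X \to Q \to 0$ in which $P$ is free and $Q$ is $R$-torsion-free splits. -/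
open CategoryTheory Opposite

universe u

/-!
Take a projective resolution `M₂ → M₁ → M₀ → Q → 0` and lift `ε : M₀ → Q` along `g` to
`l : M₀ → X`. Then `l ∘ d₁` lands in `P` and is a `P`-valued 1-cocycle; as `P ≅ 𝔄ⁿ` and
`Ext¹(Q, 𝔄) = 0`, it is a coboundary `f ∘ ψ ∘ d₁`. So `l - f ∘ ψ` vanishes on the image of `d₁`
and descends along `ε` to a section of `g`.
-/

namespace CategoryTheory.ProjectiveResolution

variable {R : Type*} [Ring R] {C : Type*} [Category* C] [Abelian C] [Linear R C]
  [EnoughProjectives C] {X : C}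

lemma exists_d_comp_eq_of_subsingleton_ext (Pr : ProjectiveResolution X) {Y : C}
    [Subsingleton (((Ext R C 1).obj (op X)).obj Y)]
    (φ : Pr.complex.X 1 ⟶ Y) (hφ : Pr.complex.d 2 1 ≫ φ = 0) :
    ∃ ψ : Pr.complex.X 0 ⟶ Y, Pr.complex.d 1 0 ≫ ψ = φ := by
  let K := Pr.complex.linearYonedaObj R Y
  have : Subsingleton (K.homology 1) := (Pr.isoExt 1 Y).toLinearEquiv.toEquiv.symm.subsingleton
  have hK : K.ExactAt 1 := by
    rw [HomologicalComplex.exactAt_iff_isZero_homology]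
    exact ModuleCat.isZero_of_subsingleton _
  rw [K.exactAt_iff' 0 1 2 (by simp) (by simp), ShortComplex.moduleCat_exact_iff] at hK
  exact hK φ hφ

end CategoryTheory.ProjectiveResolution

namespace Function.Exact

variable {S : Type*} [Ring S] {M N P T : Type*} [AddCommGroup M] [Module S M]
  [AddCommGroup N] [Module S N] [AddCommGroup P] [Module S P] [AddCommGroup T] [Module S T]
  {f : M →ₗ[S] N} {g : N →ₗ[S] P}

lemma exists_lift_of_injective (hfg : Exact f g) (hf : Injective f) (k : T →ₗ[S] N)
    (hk : g ∘ₗ k = 0) : ∃ φ : T →ₗ[S] M, f ∘ₗ φ = k := by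
  have hrange (t : T) : k t ∈ LinearMap.range f := (hfg (k t)).1 congr($hk t)
  refine ⟨(LinearEquiv.ofInjective f hf).symm.toLinearMap ∘ₗ k.codRestrict _ hrange, ?_⟩
  ext t
  exact congr($((LinearEquiv.ofInjective f hf).apply_symm_apply ⟨k t, hrange t⟩).val)

lemma exists_desc_of_surjective (hfg : Exact f g) (hg : Surjective g) (k : N →ₗ[S] T)
    (hk : k ∘ₗ f = 0) : ∃ s : P →ₗ[S] T, s ∘ₗ g = k := by
  have hle : LinearMap.range f ≤ LinearMap.ker k := by
    rintro _ ⟨m, rfl⟩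
    exact congr($hk m)
  refine ⟨(LinearMap.range f).liftQ k hle ∘ₗ (hfg.linearEquivOfSurjective hg).symm.toLinearMap, ?_⟩
  ext n
  simp [Function.Exact.linearEquivOfSurjective_symm_apply]

end Function.Exact

namespace LinearMap

variable {S : Type*} [Ring S] {M₂ M₁ M₀ P X Q : Type*}
  [AddCommGroup M₂] [Module S M₂] [AddCommGroup M₁] [Module S M₁] [AddCommGroup M₀] [Module S M₀]
  [AddCommGroup P] [Module S P] [AddCommGroup X] [Module S X] [AddCommGroup Q] [Module S Q]

/-- Every `N`-valued 1-cocycle of `M₂ → M₁ → M₀` is a coboundary, i.e. `Hom(-, N)` is exact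
at `M₁`. -/
def CocyclesExtend (d₂ : M₂ →ₗ[S] M₁) (d₁ : M₁ →ₗ[S] M₀) (N : Type*) [AddCommGroup N]
    [Module S N] : Prop :=
  ∀ φ : M₁ →ₗ[S] N, φ ∘ₗ d₂ = 0 → ∃ ψ : M₀ →ₗ[S] N, ψ ∘ₗ d₁ = φ

lemma CocyclesExtend.of_free {d₂ : M₂ →ₗ[S] M₁} {d₁ : M₁ →ₗ[S] M₀}
    (h : CocyclesExtend d₂ d₁ S) [Module.Free S P] [Module.Finite S P] :
    CocyclesExtend d₂ d₁ P := by
  intro φ hφ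
  let b := Module.Free.chooseBasis S P
  have hcoord (i) : (b.coord i ∘ₗ φ) ∘ₗ d₂ = 0 := by rw [comp_assoc, hφ, comp_zero]
  choose ψ hψ using fun i ↦ h _ (hcoord i)
  refine ⟨b.equivFun.symm.toLinearMap ∘ₗ LinearMap.pi ψ, ?_⟩
  ext x
  apply b.equivFun.injective
  ext i
  simp only [comp_apply, LinearEquiv.coe_coe, LinearEquiv.apply_symm_apply, pi_apply]
  exact congr($(hψ i) x)

lemma CocyclesExtend.exists_rightInverse [Module.Projective S M₀] {d₂ : M₂ →ₗ[S] M₁}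
    {d₁ : M₁ →ₗ[S] M₀} {ε : M₀ →ₗ[S] Q} (hd : d₁ ∘ₗ d₂ = 0) (hd₁ε : Function.Exact d₁ ε)
    (hε : Function.Surjective ε) (h : CocyclesExtend d₂ d₁ P)
    {f : P →ₗ[S] X} {g : X →ₗ[S] Q} (hfg : Function.Exact f g) (hf : Function.Injective f)
    (hg : Function.Surjective g) : ∃ s : Q →ₗ[S] X, g ∘ₗ s = LinearMap.id := by
  obtain ⟨l, hl⟩ := Module.projective_lifting_property g ε hg
  obtain ⟨φ, hφ⟩ := hfg.exists_lift_of_injective hf (l ∘ₗ d₁) (by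
    rw [← comp_assoc, hl, hd₁ε.linearMap_comp_eq_zero])
  obtain ⟨ψ, hψ⟩ := h φ (by
    refine (cancel_left hf).1 ?_
    rw [comp_zero, ← comp_assoc, hφ, comp_assoc, hd, comp_zero])
  obtain ⟨s, hs⟩ := hd₁ε.exists_desc_of_surjective hε (l - f ∘ₗ ψ) (by
    rw [sub_comp, comp_assoc, hψ, hφ, sub_self])
  refine ⟨s, (cancel_right hε).1 ?_⟩
  rw [comp_assoc, hs, comp_sub, hl, ← comp_assoc, hfg.linearMap_comp_eq_zero, zero_comp, sub_zero,
    id_comp]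

end LinearMap

namespace CategoryTheory.ProjectiveResolution

variable {S : Type u} [CommRing S] {Q : ModuleCat.{u} S} (Pr : ProjectiveResolution Q)

lemma cocyclesExtend_of_subsingleton_ext (N : ModuleCat.{u} S)
    [Subsingleton (((Ext S (ModuleCat.{u} S) 1).obj (op Q)).obj N)] :
    (Pr.complex.d 2 1).hom.CocyclesExtend (Pr.complex.d 1 0).hom N := by
  intro φ hφ
  obtain ⟨ψ, hψ⟩ := Pr.exists_d_comp_eq_of_subsingleton_ext (R := S) (Y := N) (ModuleCat.ofHom φ)
    (ModuleCat.hom_ext hφ)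
  exact ⟨ψ.hom, congr(($hψ).hom)⟩

lemma exact_d_one_zero_π_zero : Function.Exact (Pr.complex.d 1 0).hom (Pr.π.f 0).hom :=
  (ShortComplex.ShortExact.moduleCat_exact_iff_function_exact _).1
    (ShortComplex.exact_of_g_is_cokernel (.mk _ _ Pr.complex_d_comp_π_f_zero)
      Pr.isColimitCokernelCofork)

end CategoryTheory.ProjectiveResolution

theorem exists_rightInverse_of_subsingleton_ext_one_self {S : Type u} [CommRing S]
    {P X Q : Type u} [AddCommGroup P] [Module S P] [AddCommGroup X] [Module S X]
    [AddCommGroup Q] [Module S Q] [Module.Free S P] [Module.Finite S P]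
    [Subsingleton (((Ext S (ModuleCat.{u} S) 1).obj (op (ModuleCat.of S Q))).obj
      (ModuleCat.of S S))]
    {f : P →ₗ[S] X} {g : X →ₗ[S] Q} (hfg : Function.Exact f g) (hf : Function.Injective f)
    (hg : Function.Surjective g) : ∃ s : Q →ₗ[S] X, g ∘ₗ s = LinearMap.id := by
  obtain ⟨Pr⟩ := HasProjectiveResolution.out (Z := ModuleCat.of S Q)
  have : Module.Projective S (Pr.complex.X 0) :=
    (IsProjective.iff_projective _).2 (Pr.projective 0)
  have hd : (Pr.complex.d 1 0).hom ∘ₗ (Pr.complex.d 2 1).hom = 0 :=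
    congr(($(Pr.complex.d_comp_d 2 1 0)).hom)
  have hε : Function.Surjective (Pr.π.f 0).hom := (ModuleCat.epi_iff_surjective _).1 inferInstance
  exact (Pr.cocyclesExtend_of_subsingleton_ext (ModuleCat.of S S)).of_free.exists_rightInverse
    hd Pr.exact_d_one_zero_π_zero hε hfg hf hg

theorem ses_with_free_kernel_and_torsionFree_quotient_splits_general
    (R : Type u) [CommRing R]
    (𝔄 : Type u) [CommRing 𝔄] [Algebra R 𝔄]
    (hGor : ∀ (N : Type u) [AddCommGroup N] [Module 𝔄 N] [Module R N] [IsScalarTower R 𝔄 N],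
      Module.Finite 𝔄 N → (∀ (r : R) (n : N), r • n = 0 → r = 0 ∨ n = 0) →
      Subsingleton (((Ext 𝔄 (ModuleCat.{u} 𝔄) 1).obj (op (ModuleCat.of 𝔄 N))).obj
        (ModuleCat.of 𝔄 𝔄)))
    (P X Q : Type u) [AddCommGroup P] [Module 𝔄 P] [AddCommGroup X] [Module 𝔄 X]
    [AddCommGroup Q] [Module 𝔄 Q]
    [Module.Free 𝔄 P] [Module.Finite 𝔄 P] [Module.Finite 𝔄 Q]
    [Module R Q] [IsScalarTower R 𝔄 Q]
    (hQtf : ∀ (r : R) (q : Q), r • q = 0 → r = 0 ∨ q = 0)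
    (f : P →ₗ[𝔄] X) (g : X →ₗ[𝔄] Q)
    (hf : Function.Injective f) (hg : Function.Surjective g)
    (hexact : LinearMap.range f = LinearMap.ker g) :
    ∃ s : Q →ₗ[𝔄] X, g ∘ₗ s = LinearMap.id :=
  have := hGor Q ‹_› hQtf
  exists_rightInverse_of_subsingleton_ext_one_self (LinearMap.exact_iff.2 hexact.symm) hf hg

/-- Let `R` be a Dedekind domain of characteristic `0` with fraction field
`F` and let `𝔄` be a Gorenstein `R`-order in a finite-dimensional separable commutative
`F`-algebra `A` (Gorenstein meaning `Ext¹_𝔄(N, 𝔄) = 0` for all finitely generated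
`R`-torsion-free `𝔄`-modules `N`). Then every short exact sequence
`0 → P → X → Q → 0` of finitely generated `𝔄`-modules in which `P` is free and `Q` is
`R`-torsion-free splits. -/
theorem ses_with_free_kernel_and_torsionFree_quotient_splits
    (R : Type u) [CommRing R] [IsDedekindDomain R] [CharZero R]
    (F : Type u) [Field F] [Algebra R F] [IsFractionRing R F]
    (A : Type u) [CommRing A] [Algebra F A] [FiniteDimensional F A] [Algebra.IsSeparable F A]
    [Algebra R A] [IsScalarTower R F A]
    (𝔄 : Type u) [CommRing 𝔄] [Algebra R 𝔄] [Module.Finite R 𝔄]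
    [Algebra 𝔄 A] [IsScalarTower R 𝔄 A]
    (hinj : Function.Injective (algebraMap 𝔄 A))
    (hspan : Submodule.span F (Set.range (algebraMap 𝔄 A)) = ⊤)
    (hGor : ∀ (N : Type u) [AddCommGroup N] [Module 𝔄 N] [Module R N] [IsScalarTower R 𝔄 N],
      Module.Finite 𝔄 N → (∀ (r : R) (n : N), r • n = 0 → r = 0 ∨ n = 0) →
      Subsingleton (((Ext 𝔄 (ModuleCat.{u} 𝔄) 1).obj (op (ModuleCat.of 𝔄 N))).obj
        (ModuleCat.of 𝔄 𝔄)))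
    (P X Q : Type u) [AddCommGroup P] [Module 𝔄 P] [AddCommGroup X] [Module 𝔄 X]
    [AddCommGroup Q] [Module 𝔄 Q]
    [Module.Free 𝔄 P] [Module.Finite 𝔄 P] [Module.Finite 𝔄 X] [Module.Finite 𝔄 Q]
    [Module R Q] [IsScalarTower R 𝔄 Q]
    (hQtf : ∀ (r : R) (q : Q), r • q = 0 → r = 0 ∨ q = 0)
    (f : P →ₗ[𝔄] X) (g : X →ₗ[𝔄] Q)
    (hf : Function.Injective f) (hg : Function.Surjective g)
    (hexact : LinearMap.range f = LinearMap.ker g) :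
    ∃ s : Q →ₗ[𝔄] X, g ∘ₗ s = LinearMap.id :=
  ses_with_free_kernel_and_torsionFree_quotient_splits_general R 𝔄 hGor P X Q hQtf f g hf hg hexact
end

section
/- Let $\mathfrak{A}$ be a commutative ring and let $M$ be a finitely generated $\mathfrak{A}$-module. If $X \subseteq M$ is a submodule that is free of rank $a$ as an $\mathfrak{A}$-module, then the zeroth Fitting ideal of $M/X$ is contained in the $a$-th Fitting ideal of $M$: $\operatorname{Fit}^0_{\mathfrak{A}}(M/X) \subseteq \operatorname{Fit}^a_{\mathfrak{A}}(M)$. -/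
/-- The `a`-th Fitting ideal of a module `M` over a commutative ring `A`: for a finite
presentation `A^n → M` (surjection with relation module the kernel), it is the ideal
generated by the `(n-a) × (n-a)` minors of the relation matrix; since this is independent
of the chosen presentation, we take the supremum over all such presentations. -/
noncomputable def fittingIdeal (A : Type*) [CommRing A] (M : Type*) [AddCommGroup M]
    [Module A M] (a : ℕ) : Ideal A :=
  ⨆ (n : ℕ), ⨆ (f : (Fin n → A) →ₗ[A] M), ⨆ (_ : Function.Surjective f),
    Ideal.span { d : A | ∃ (r : Fin (n - a) → Fin n → A) (c : Fin (n - a) → Fin n),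
      (∀ k, f (r k) = 0) ∧ d = Matrix.det (Matrix.of fun k l => r k (c l)) }

/-!
Lift a presentation `f : 𝔄ⁿ → M/X` to `M` and append the basis of `X`: this gives a
presentation `𝔄ⁿ⁺ᵃ → M`. A relation `r` of `f` maps into `X`, so subtracting its expansion `w`
in the basis gives a relation `(r, -w)` of the new presentation. An `n × n` minor of `f`'s
relations is then the minor of these lifted relations on columns among the first `n`, an
`((n + a) - a)`-minor of a presentation of `M`.
-/

open Function Matrix

section

variable {A : Type*} [CommRing A]

theorem fittingIdeal_le_of_forall_det_mem {N : Type*} [AddCommGroup N] [Module A N] {a : ℕ}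
    {I : Ideal A}
    (h : ∀ n (f : (Fin n → A) →ₗ[A] N), Surjective f →
      ∀ (r : Fin (n - a) → Fin n → A) (c : Fin (n - a) → Fin n),
        (∀ k, f (r k) = 0) → det (of fun k l => r k (c l)) ∈ I) :
    fittingIdeal A N a ≤ I :=
  iSup_le fun n => iSup_le fun f => iSup_le fun hf => Ideal.span_le.2 <| by
    rintro d ⟨r, c, hr, rfl⟩
    exact h n f hf r c hr

variable {M : Type*} [AddCommGroup M] [Module A M]

theorem det_mem_fittingIdeal {n a : ℕ} (F : (Fin (n + a) → A) →ₗ[A] M) (hF : Surjective F)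
    (r : Fin n → Fin (n + a) → A) (c : Fin n → Fin (n + a)) (hr : ∀ k, F (r k) = 0) :
    det (of fun k l => r k (c l)) ∈ fittingIdeal A M a := by
  have h : n + a - a = n := Nat.add_sub_cancel n a
  have hdet : det (of fun k l => r (Fin.cast h k) (c (Fin.cast h l))) =
      det (of fun k l => r k (c l)) :=
    det_submatrix_equiv_self (finCongr h) (of fun k l => r k (c l))
  rw [← hdet]
  refine Submodule.mem_iSup_of_mem (n + a) <| Submodule.mem_iSup_of_mem F <|
    Submodule.mem_iSup_of_mem hF <| Ideal.subset_span ⟨_, _, fun k => hr _, rfl⟩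

theorem Fintype.linearCombination_append {n a : ℕ} (u : Fin n → M) (v : Fin a → M)
    (x : Fin n → A) (y : Fin a → A) :
    Fintype.linearCombination A (Fin.append u v) (Fin.append x y) =
      Fintype.linearCombination A u x + Fintype.linearCombination A v y := by
  simp only [Fintype.linearCombination_apply, Fin.sum_univ_add, Fin.append_left, Fin.append_right]

theorem Submodule.exists_linearCombination_lift (X : Submodule A M) {n : ℕ}
    (f : (Fin n → A) →ₗ[A] M ⧸ X) :
    ∃ u : Fin n → M, X.mkQ ∘ₗ Fintype.linearCombination A u = f := by
  classical
  choose u hu using fun i => X.mkQ_surjective (f (Pi.single i 1))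
  exact ⟨u, by ext i; simp [Fintype.linearCombination_apply_single, hu]⟩

theorem Module.Basis.span_range_coe {a : ℕ} {X : Submodule A M} (b : Module.Basis (Fin a) A X) :
    Submodule.span A (Set.range fun j => (b j : M)) = X := by
  rw [show (fun j => (b j : M)) = X.subtype ∘ b from rfl, Set.range_comp, Submodule.span_image,
    b.span_eq, Submodule.map_subtype_top]

theorem Submodule.exists_linearCombination_append_eq_zero {X : Submodule A M} {n a : ℕ} {u : Fin n → M}
    {v : Fin a → M} (hv : X ≤ LinearMap.range (Fintype.linearCombination A v)) {x : Fin n → A}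
    (hx : X.mkQ (Fintype.linearCombination A u x) = 0) :
    ∃ y : Fin a → A, Fintype.linearCombination A (Fin.append u v) (Fin.append x y) = 0 := by
  obtain ⟨y, hy⟩ := hv ((Submodule.Quotient.mk_eq_zero X).1 hx)
  exact ⟨-y, by rw [Fintype.linearCombination_append, map_neg, hy, add_neg_cancel]⟩

theorem Submodule.surjective_linearCombination_append {X : Submodule A M} {n a : ℕ}
    {u : Fin n → M} {v : Fin a → M} (hu : Surjective (X.mkQ ∘ₗ Fintype.linearCombination A u))
    (hv : X ≤ LinearMap.range (Fintype.linearCombination A v)) :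
    Surjective (Fintype.linearCombination A (Fin.append u v)) := by
  intro m
  obtain ⟨x, hx⟩ := hu (X.mkQ m)
  have hmx : m - Fintype.linearCombination A u x ∈ X := by
    rw [← Submodule.Quotient.mk_eq_zero, Submodule.Quotient.mk_sub]
    simpa [sub_eq_zero] using hx.symm
  obtain ⟨y, hy⟩ := hv hmx
  exact ⟨Fin.append x y, by rw [Fintype.linearCombination_append, hy, add_sub_cancel]⟩

end

theorem fittingIdeal_quotient_le_general
    (𝔄 : Type*) [CommRing 𝔄] (M : Type*) [AddCommGroup M] [Module 𝔄 M]
    (a : ℕ) (X : Submodule 𝔄 M) (b : Module.Basis (Fin a) 𝔄 X) :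
    fittingIdeal 𝔄 (M ⧸ X) 0 ≤ fittingIdeal 𝔄 M a := by
  refine fittingIdeal_le_of_forall_det_mem fun n f hf r c hr => ?_
  obtain ⟨u, rfl⟩ := X.exists_linearCombination_lift f
  have hX : X ≤ LinearMap.range (Fintype.linearCombination 𝔄 fun j => (b j : M)) := by
    rw [Fintype.range_linearCombination, b.span_range_coe]
  choose y hy using fun k => X.exists_linearCombination_append_eq_zero hX (hr k)
  have key := det_mem_fittingIdeal _ (X.surjective_linearCombination_append hf hX)
    (fun k => Fin.append (r k) (y k)) (fun l => Fin.castAdd a (c l)) hy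
  simp only [Fin.append_left] at key
  exact key

/-- Let `𝔄` be a commutative ring and `M` a finitely generated `𝔄`-module.
If `X ⊆ M` is a submodule that is free of rank `a` as an `𝔄`-module, then
`Fit⁰(M/X) ⊆ Fitᵃ(M)`. -/
theorem fittingIdeal_quotient_le
    (𝔄 : Type*) [CommRing 𝔄] (M : Type*) [AddCommGroup M] [Module 𝔄 M] [Module.Finite 𝔄 M]
    (a : ℕ) (X : Submodule 𝔄 M) (b : Module.Basis (Fin a) 𝔄 X) :
    fittingIdeal 𝔄 (M ⧸ X) 0 ≤ fittingIdeal 𝔄 M a :=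
  fittingIdeal_quotient_le_general 𝔄 M a X b
end

section
/- Let $R$ be a Dedekind domain of characteristic $0$ with fraction field $F$, fix an algebraic closure $F^c$ of $F$, and let $\Gamma$ be a finite abelian group. For $x \in F^c[\Gamma]$ define $x_\rho \in F^c$ for each character $\rho: \Gamma \to F^{c,\times}$ by $x = \sum_{\rho} x_\rho e_\rho$ with $e_\rho := |\Gamma|^{-1}\sum_{\gamma\in\Gamma}\rho(\gamma^{-1})\gamma$. Then $x$ belongs to $R[\Gamma]$ if and only if all of the following hold: (1) $x_\rho$ is integral over $R$ (lies in the integral closure $\mathcal{O}_\rho$ of $R$ in $F(\rho)$) for every $\rho$; (2) $\omega(x_\rho) = x_{\omega\circ\rho}$ for every $\rho$ and every $F$-automorphism $\omega$ of $F(\rho)$; and (3) $\sum_{\rho}\rho(\gamma^{-1}) x_\rho \equiv 0 \pmod{|\Gamma|\cdot R}$ for every $\gamma\in\Gamma$ (the sum lies in $F$ by (2) and in $|\Gamma|\cdot R$). -/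
/-!
There are `|Γ|` characters `Γ →* F^c` because `F^c` has enough roots of unity, and they satisfy
the orthogonality relation `∑_ρ ρ g = |Γ| [g = 1]`. Hence `∑_ρ ρ(γ⁻¹) x_ρ = |Γ| x_γ`, which
turns (3) into `x_γ ∈ R`. Conversely, if all `x_γ ∈ R`, then `x_ρ` is integral because character
values are roots of unity, and `F`-automorphisms fix the coefficients, which gives (1) and (2).
-/

universe u

namespace MonoidHom

section Characters

variable {Γ M : Type*} [CommMonoid M]

instance finite_of_hasEnoughRootsOfUnity [Group Γ] [Finite Γ]
    [HasEnoughRootsOfUnity M (Monoid.exponent Γ)] : Finite (Γ →* M) :=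
  .of_equiv _ toHomUnitsMulEquiv.symm.toEquiv

variable [CommGroup Γ] [Finite Γ] [HasEnoughRootsOfUnity M (Monoid.exponent Γ)]

theorem card_eq_of_hasEnoughRootsOfUnity : Nat.card (Γ →* M) = Nat.card Γ := by
  rw [Nat.card_congr toHomUnitsMulEquiv.toEquiv,
    CommGroup.card_monoidHom_of_hasEnoughRootsOfUnity]

variable {K : Type*} [CommRing K] [IsDomain K] [HasEnoughRootsOfUnity K (Monoid.exponent Γ)]

/-- Multiplying by a character `χ` with `χ g ≠ 1` permutes the characters, so it fixes the sum. -/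
theorem finsum_apply_eq_zero {g : Γ} (hg : g ≠ 1) : ∑ᶠ ρ : Γ →* K, ρ g = 0 := by
  obtain ⟨φ, hφ⟩ := CommGroup.exists_apply_ne_one_of_hasEnoughRootsOfUnity Γ K hg
  let χ : Γ →* K := (Units.coeHom K).comp φ
  have hχ : χ g ≠ 1 := by simpa [χ, Units.val_eq_one] using hφ
  have hbij : Function.Bijective (χ * ·) := Finite.injective_iff_bijective.mp
    fun ρ ρ' h => ext fun γ => (φ γ).isUnit.mul_left_cancel congr($h γ)
  refine eq_zero_of_mul_eq_self_left hχ ?_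
  rw [mul_finsum]
  exact finsum_comp_equiv (Equiv.ofBijective _ hbij) (f := fun ρ : Γ →* K => ρ g)

theorem finsum_apply_eq_ite [DecidableEq Γ] (g : Γ) :
    ∑ᶠ ρ : Γ →* K, ρ g = if g = 1 then (Nat.card Γ : K) else 0 := by
  split_ifs with hg
  · have := Fintype.ofFinite (Γ →* K)
    simp [hg, finsum_eq_sum_of_fintype, ← Nat.card_eq_fintype_card,
      card_eq_of_hasEnoughRootsOfUnity]
  · exact finsum_apply_eq_zero hg

end Characters

section Integrality

variable {R K Γ : Type*} [CommRing R] [CommRing K] [Algebra R K] [Group Γ] [Finite Γ]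

theorem isIntegral_apply (ρ : Γ →* K) (γ : Γ) : IsIntegral R (ρ γ) :=
  .of_pow Nat.card_pos <| by rw [← map_pow, pow_card_eq_one', map_one]; exact isIntegral_one

end Integrality

end MonoidHom

section CharacterSums

variable {Γ : Type*} [CommGroup Γ] [Fintype Γ]

theorem finsum_apply_inv_mul_sum_mul_apply {K : Type*} [CommRing K] [IsDomain K]
    [HasEnoughRootsOfUnity K (Monoid.exponent Γ)] (c : Γ → K) (γ : Γ) :
    ∑ᶠ ρ : Γ →* K, ρ γ⁻¹ * ∑ δ, c δ * ρ δ = Nat.card Γ * c γ := by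
  classical
  have := Fintype.ofFinite (Γ →* K)
  calc ∑ᶠ ρ : Γ →* K, ρ γ⁻¹ * ∑ δ, c δ * ρ δ
      = ∑ δ, c δ * ∑ᶠ ρ : Γ →* K, ρ (γ⁻¹ * δ) := by
        simp only [finsum_eq_sum_of_fintype, Finset.mul_sum, map_mul]
        rw [Finset.sum_comm]
        exact Finset.sum_congr rfl fun _ _ => Finset.sum_congr rfl fun _ _ => by ring
    _ = ∑ δ, c δ * if δ = γ then (Nat.card Γ : K) else 0 := by
        simp only [MonoidHom.finsum_apply_eq_ite, inv_mul_eq_one, eq_comm]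
    _ = Nat.card Γ * c γ := by simp [mul_comm]

theorem isIntegral_sum_mul_apply {R K : Type*} [CommRing R] [CommRing K] [Algebra R K]
    {c : Γ → K} (hc : ∀ γ, IsIntegral R (c γ)) (ρ : Γ →* K) :
    IsIntegral R (∑ γ, c γ * ρ γ) :=
  IsIntegral.sum _ fun γ _ => (hc γ).mul (ρ.isIntegral_apply γ)

variable {F K : Type*} [Field F] [Field K] [Algebra F K] {c : Γ → K}

theorem sum_mul_apply_mem_adjoin_range (hc : ∀ γ, c γ ∈ (algebraMap F K).range)
    (ρ : Γ →* K) :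
    ∑ γ, c γ * ρ γ ∈ IntermediateField.adjoin F (Set.range fun γ : Γ => ρ γ) := by
  refine IntermediateField.sum_mem _ fun γ _ => mul_mem ?_ ?_
  · obtain ⟨a, ha⟩ := hc γ
    exact ha ▸ IntermediateField.algebraMap_mem _ a
  · exact IntermediateField.subset_adjoin F _ ⟨γ, rfl⟩

theorem AlgHom.map_sum_mul_apply (ω : K →ₐ[F] K) (hc : ∀ γ, c γ ∈ (algebraMap F K).range)
    (ρ : Γ →* K) :
    ω (∑ γ, c γ * ρ γ) = ∑ γ, c γ * (ω.toRingHom.toMonoidHom.comp ρ) γ := by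
  refine (map_sum ω _ _).trans (Finset.sum_congr rfl fun γ _ => ?_)
  obtain ⟨a, ha⟩ := hc γ
  rw [map_mul, ← ha, AlgHom.commutes]
  rfl

end CharacterSums

theorem mem_integral_group_ring_iff_general
    (R : Type u) [CommRing R] [CharZero R]
    (F : Type u) [Field F] [Algebra R F] [IsFractionRing R F]
    (Fc : Type u) [Field Fc] [Algebra F Fc] [IsAlgClosure F Fc]
    [Algebra R Fc] [IsScalarTower R F Fc]
    (Γ : Type u) [CommGroup Γ] [Fintype Γ]
    (x : MonoidAlgebra Fc Γ)
    (xρ : (Γ →* Fc) → Fc)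
    (hxρ : ∀ ρ : Γ →* Fc, xρ ρ = ∑ γ : Γ, x.coeff γ * ρ γ) :
    (∀ γ : Γ, x.coeff γ ∈ (algebraMap R Fc).range) ↔
      ((∀ ρ : Γ →* Fc, IsIntegral R (xρ ρ) ∧
          xρ ρ ∈ IntermediateField.adjoin F (Set.range fun γ : Γ => ρ γ)) ∧
       (∀ (ρ : Γ →* Fc) (ω : Fc ≃ₐ[F] Fc),
          ω (xρ ρ) = xρ ((ω.toAlgHom.toRingHom.toMonoidHom).comp ρ)) ∧
       (∀ γ : Γ, ∃ r : R,
          ∑ᶠ ρ : Γ →* Fc, ρ γ⁻¹ * xρ ρ =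
            (Fintype.card Γ : Fc) * algebraMap R Fc r)) := by
  have : CharZero F := charZero_of_injective_algebraMap (IsFractionRing.injective R F)
  have : CharZero Fc := charZero_of_injective_algebraMap (algebraMap F Fc).injective
  have : IsAlgClosed Fc := IsAlgClosure.isAlgClosed F
  have : NeZero (Monoid.exponent Γ : Fc) := ⟨Nat.cast_ne_zero.mpr Monoid.exponent_ne_zero_of_finite⟩
  have inversion (γ : Γ) : ∑ᶠ ρ : Γ →* Fc, ρ γ⁻¹ * xρ ρ = Fintype.card Γ * x.coeff γ := by
    simp only [hxρ, finsum_apply_inv_mul_sum_mul_apply, Nat.card_eq_fintype_card]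
  constructor
  · intro h
    have hF (γ : Γ) : x.coeff γ ∈ (algebraMap F Fc).range := by
      obtain ⟨r, hr⟩ := h γ
      exact ⟨algebraMap R F r, by rw [← IsScalarTower.algebraMap_apply, hr]⟩
    refine ⟨fun ρ => ⟨?_, ?_⟩, fun ρ ω => ?_, fun γ => ?_⟩
    · rw [hxρ]
      refine isIntegral_sum_mul_apply (fun γ => ?_) ρ
      obtain ⟨r, hr⟩ := h γ
      exact hr ▸ isIntegral_algebraMap
    · exact hxρ ρ ▸ sum_mul_apply_mem_adjoin_range hF ρ
    · rw [hxρ, hxρ]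
      exact AlgHom.map_sum_mul_apply ω.toAlgHom hF ρ
    · obtain ⟨r, hr⟩ := h γ
      exact ⟨r, by rw [inversion, hr]⟩
  · rintro ⟨-, -, h⟩ γ
    obtain ⟨r, hr⟩ := h γ
    rw [inversion] at hr
    exact ⟨r, (mul_left_cancel₀ (Nat.cast_ne_zero.mpr Fintype.card_ne_zero) hr).symm⟩

/-- Let `R` be a Dedekind domain of characteristic `0` with fraction field
`F`, let `F^c` be an algebraic closure of `F`, and let `Γ` be a finite abelian group. For
`x ∈ F^c[Γ]` and a character `ρ : Γ → F^{c,×}` let `x_ρ := ∑_γ x_γ ρ(γ)` be the `ρ`-component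
of `x` (so that `x = ∑_ρ x_ρ e_ρ` with `e_ρ = |Γ|⁻¹ ∑_γ ρ(γ⁻¹) γ`). Then `x ∈ R[Γ]` (i.e.
all coefficients of `x` lie in `R`) if and only if: (1) each `x_ρ` lies in the integral
closure `𝒪_ρ` of `R` in `F(ρ)` (it is integral over `R` and lies in the subfield generated
over `F` by the values of `ρ`); (2) `ω(x_ρ) = x_{ω ∘ ρ}` for every `F`-automorphism `ω`;
and (3) for every `γ ∈ Γ`, `∑_ρ ρ(γ⁻¹) x_ρ ≡ 0 (mod |Γ|·R)`. -/
theorem mem_integral_group_ring_iff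
    (R : Type u) [CommRing R] [IsDedekindDomain R] [CharZero R]
    (F : Type u) [Field F] [Algebra R F] [IsFractionRing R F]
    (Fc : Type u) [Field Fc] [Algebra F Fc] [IsAlgClosure F Fc]
    [Algebra R Fc] [IsScalarTower R F Fc]
    (Γ : Type u) [CommGroup Γ] [Fintype Γ]
    (x : MonoidAlgebra Fc Γ)
    (xρ : (Γ →* Fc) → Fc)
    (hxρ : ∀ ρ : Γ →* Fc, xρ ρ = ∑ γ : Γ, x.coeff γ * ρ γ) :
    (∀ γ : Γ, x.coeff γ ∈ (algebraMap R Fc).range) ↔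
      ((∀ ρ : Γ →* Fc, IsIntegral R (xρ ρ) ∧
          xρ ρ ∈ IntermediateField.adjoin F (Set.range fun γ : Γ => ρ γ)) ∧
       (∀ (ρ : Γ →* Fc) (ω : Fc ≃ₐ[F] Fc),
          ω (xρ ρ) = xρ ((ω.toAlgHom.toRingHom.toMonoidHom).comp ρ)) ∧
       (∀ γ : Γ, ∃ r : R,
          ∑ᶠ ρ : Γ →* Fc, ρ γ⁻¹ * xρ ρ =
            (Fintype.card Γ : Fc) * algebraMap R Fc r)) :=
  mem_integral_group_ring_iff_general R F Fc Γ x xρ hxρ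
end

section
/- Let $e$ be an idempotent of the total quotient algebra $A$ of an $R$-order $\mathfrak{A}$, and set $\mathfrak{A}' := \mathfrak{A}e$, $\mathfrak{A}^\sharp := \mathfrak{A}\cap\mathfrak{A}(1-e)$ and $\mathfrak{A}^\dagger := \mathfrak{A}\cap\mathfrak{A}'$. Then for every finitely generated $\mathfrak{A}$-module $M$ there is an exact sequence of torsion submodules $(\mathfrak{A}^\sharp\otimes_{\mathfrak{A}} M)_{tor} \to M_{tor} \to (\mathfrak{A}'\otimes_{\mathfrak{A}} M)_{tor}$ induced by the short exact sequence $0\to\mathfrak{A}^\sharp\to\mathfrak{A}\to\mathfrak{A}'\to 0$, and consequently $\mathfrak{A}^\dagger\cdot\operatorname{Ann}_{\mathfrak{A}'}((\mathfrak{A}'\otimes_{\mathfrak{A}}M)_{tor}) \subseteq \operatorname{Ann}_{\mathfrak{A}}(M_{tor})$. -/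
open scoped TensorProduct

universe u

/-- Let `R` be a Dedekind domain of characteristic `0` with fraction field
`F` and `𝔄` an `R`-order in the finite-dimensional separable commutative `F`-algebra `A`.
Let `e` be an idempotent of `A` and set `𝔄' := 𝔄e`, `𝔄^♯ := 𝔄 ∩ 𝔄(1-e)` (the ideal
`{a ∈ 𝔄 : a e = 0}`) and `𝔄^† := 𝔄 ∩ 𝔄'` (the ideal `{a ∈ 𝔄 : a e = a}`). Then for every
finitely generated `𝔄`-module `M`: (a) the short exact sequence `0 → 𝔄^♯ → 𝔄 → 𝔄' → 0`
induces an exact sequence of (`R`-)torsion submodules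
`(𝔄^♯ ⊗_𝔄 M)_tor → M_tor → (𝔄' ⊗_𝔄 M)_tor` (we use the canonical model
`𝔄' ⊗_𝔄 M = M / 𝔄^♯M`, so exactness at the middle says that a torsion element of `M` dies
in `M / 𝔄^♯M` exactly when it is the image of a torsion element of `𝔄^♯ ⊗_𝔄 M`); and
consequently (b) `𝔄^† · Ann_{𝔄'}((𝔄' ⊗_𝔄 M)_tor) ⊆ Ann_𝔄(M_tor)`. -/
theorem torsion_sequence_and_annihilator_inclusion
    (R : Type u) [CommRing R] [IsDedekindDomain R] [CharZero R]
    (F : Type u) [Field F] [Algebra R F] [IsFractionRing R F]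
    (A : Type u) [CommRing A] [Algebra F A] [FiniteDimensional F A] [Algebra.IsSeparable F A]
    [Algebra R A] [IsScalarTower R F A]
    (𝔄 : Type u) [CommRing 𝔄] [Algebra R 𝔄] [Module.Finite R 𝔄]
    [Algebra 𝔄 A] [IsScalarTower R 𝔄 A]
    (hinj : Function.Injective (algebraMap 𝔄 A))
    (hspan : Submodule.span F (Set.range (algebraMap 𝔄 A)) = ⊤)
    (e : A) (he : IsIdempotentElem e)
    (Isharp : Ideal 𝔄)
    (hIsharp : ∀ b : 𝔄, b ∈ Isharp ↔ algebraMap 𝔄 A b * e = 0)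
    (Idag : Ideal 𝔄)
    (hIdag : ∀ b : 𝔄, b ∈ Idag ↔ algebraMap 𝔄 A b * e = algebraMap 𝔄 A b)
    (M : Type u) [AddCommGroup M] [Module 𝔄 M] [Module R M] [IsScalarTower R 𝔄 M]
    [Module.Finite 𝔄 M] :
    (∀ x : M, x ∈ Submodule.torsion R M →
      (x ∈ Isharp • (⊤ : Submodule 𝔄 M) ↔
        ∃ z : ↥Isharp ⊗[𝔄] M, z ∈ Submodule.torsion R (↥Isharp ⊗[𝔄] M) ∧
          TensorProduct.lift ((LinearMap.lsmul 𝔄 M).comp Isharp.subtype) z = x)) ∧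
    (∀ a ∈ Idag, ∀ b : 𝔄,
      (∀ y : M ⧸ (Isharp • (⊤ : Submodule 𝔄 M)),
        y ∈ Submodule.torsion R (M ⧸ (Isharp • (⊤ : Submodule 𝔄 M))) → b • y = 0) →
      ∀ x ∈ Submodule.torsion R M, (a * b) • x = 0) := by
  classical
  -- Step 1: clear denominators for `e`: find `r ∈ R⁰` and `c ∈ 𝔄` with `r • e = alg c`.
  have hclear : ∀ x : A, x ∈ Submodule.span F (Set.range (algebraMap 𝔄 A)) →
      ∃ r ∈ nonZeroDivisors R, ∃ c : 𝔄, r • x = algebraMap 𝔄 A c := by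
    intro x hx
    induction hx using Submodule.span_induction with
    | mem x hx =>
      obtain ⟨c, rfl⟩ := hx
      exact ⟨1, one_mem _, c, one_smul _ _⟩
    | zero => exact ⟨1, one_mem _, 0, by simp⟩
    | add x y _ _ ihx ihy =>
      obtain ⟨r1, hr1, c1, h1⟩ := ihx
      obtain ⟨r2, hr2, c2, h2⟩ := ihy
      refine ⟨r1 * r2, mul_mem hr1 hr2, r2 • c1 + r1 • c2, ?_⟩
      have hxy : (r1 * r2) • (x + y) = r2 • (r1 • x) + r1 • (r2 • y) := by
        rw [smul_add, smul_smul, smul_smul, mul_comm r2 r1]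
      rw [hxy, h1, h2, map_add]
      congr 1 <;>
        rw [Algebra.smul_def, Algebra.smul_def, IsScalarTower.algebraMap_apply R 𝔄 A,
          ← map_mul]
    | smul f x _ ih =>
      obtain ⟨r1, hr1, c1, h1⟩ := ih
      obtain ⟨⟨n, s⟩, hs⟩ := IsLocalization.surj (nonZeroDivisors R) f
      refine ⟨(s : R) * r1, mul_mem s.2 hr1, n • c1, ?_⟩
      have key : ((s : R) * r1) • (f • x) = (algebraMap R F n) • (r1 • x) := by
        rw [mul_smul, smul_comm r1 f x, ← smul_assoc,
          show ((s : R) • f) = algebraMap R F n by rw [Algebra.smul_def, mul_comm, hs]]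
      rw [key, h1, Algebra.smul_def, Algebra.smul_def n c1, map_mul,
        ← IsScalarTower.algebraMap_apply R 𝔄 A, ← IsScalarTower.algebraMap_apply R F A]
  obtain ⟨r, hr, c, hc⟩ := hclear e (by rw [hspan]; trivial)
  -- `c` annihilates `Isharp`
  have hcs : ∀ s ∈ Isharp, c * s = 0 := by
    intro s hs
    apply hinj
    have h2 := (hIsharp s).1 hs
    rw [map_mul, map_zero, ← hc, smul_mul_assoc, mul_comm e, h2, smul_zero]
  -- `d := r·1 - c` lies in `Isharp`
  have hd : (algebraMap R 𝔄 r - c) ∈ Isharp := by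
    rw [hIsharp, map_sub, sub_mul, ← IsScalarTower.algebraMap_apply R 𝔄 A,
      ← Algebra.smul_def, ← hc, smul_mul_assoc, he, sub_self]
  set d : ↥Isharp := ⟨algebraMap R 𝔄 r - c, hd⟩ with hd_def
  set φ : ↥Isharp ⊗[𝔄] M →ₗ[𝔄] M :=
    TensorProduct.lift ((LinearMap.lsmul 𝔄 M).comp Isharp.subtype) with hφ
  have hφ_tmul : ∀ (s : ↥Isharp) (m : M), φ (s ⊗ₜ m) = (s : 𝔄) • m := by
    intro s m; simp [hφ]
  -- key identity: r • w = d ⊗ φ w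
  have key : ∀ w : ↥Isharp ⊗[𝔄] M,
      (algebraMap R 𝔄 r) • w = d ⊗ₜ[𝔄] (φ w) := by
    intro w
    induction w using TensorProduct.induction_on with
    | zero => simp
    | tmul s m =>
      rw [hφ_tmul, TensorProduct.smul_tmul']
      have h1 : algebraMap R 𝔄 r • s = (s : 𝔄) • d := by
        apply Subtype.ext
        show algebraMap R 𝔄 r • (s : 𝔄) = (s : 𝔄) • (algebraMap R 𝔄 r - c)
        rw [smul_eq_mul, smul_eq_mul, mul_sub, mul_comm (s : 𝔄) (algebraMap R 𝔄 r),
          mul_comm (s : 𝔄) c, hcs s s.2, sub_zero]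
      rw [h1, TensorProduct.smul_tmul]
    | add x y hx hy =>
      rw [smul_add, map_add, TensorProduct.tmul_add, hx, hy]
  have hker : ∀ w : ↥Isharp ⊗[𝔄] M, φ w = 0 → (algebraMap R 𝔄 r) • w = 0 := by
    intro w h0
    rw [key w, h0, TensorProduct.tmul_zero]
  have himg : ∀ z : ↥Isharp ⊗[𝔄] M, φ z ∈ Isharp • (⊤ : Submodule 𝔄 M) := by
    intro z
    induction z using TensorProduct.induction_on with
    | zero => rw [map_zero]; exact zero_mem _
    | tmul s m =>
      rw [hφ_tmul]
      exact Submodule.smul_mem_smul s.2 Submodule.mem_top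
    | add x y hx' hy' =>
      rw [map_add]; exact Submodule.add_mem _ hx' hy'
  constructor
  · -- part (a)
    intro x hx
    constructor
    · intro hmem
      obtain ⟨z0, hz0⟩ : ∃ z0 : ↥Isharp ⊗[𝔄] M, φ z0 = x := by
        refine Submodule.smul_induction_on hmem ?_ ?_
        · intro s hs m _
          exact ⟨(⟨s, hs⟩ : ↥Isharp) ⊗ₜ m, hφ_tmul _ _⟩
        · rintro x y ⟨z1, rfl⟩ ⟨z2, rfl⟩
          exact ⟨z1 + z2, map_add _ _ _⟩
      obtain ⟨t, ht⟩ := hx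
      refine ⟨z0, ?_, hz0⟩
      refine ⟨⟨r, hr⟩ * t, ?_⟩
      have h1 : φ ((t : R) • z0) = 0 := by
        rw [← algebraMap_smul 𝔄 (t : R) z0, map_smul, algebraMap_smul, hz0]
        exact ht
      have h2 := hker _ h1
      rw [Submonoid.smul_def, Submonoid.coe_mul, mul_smul,
        ← algebraMap_smul 𝔄 r ((t : R) • z0)]
      exact h2
    · rintro ⟨z, -, rfl⟩
      exact himg z
  · -- part (b)
    intro a ha b hb x hx
    have has : ∀ s ∈ Isharp, a * s = 0 := by
      intro s hs
      apply hinj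
      have h1 := (hIdag a).1 ha
      have h2 := (hIsharp s).1 hs
      rw [map_mul, map_zero, ← h1, mul_assoc, mul_comm e, h2, mul_zero]
    have hann : ∀ y ∈ Isharp • (⊤ : Submodule 𝔄 M), a • y = 0 := by
      intro y hy
      refine Submodule.smul_induction_on hy ?_ ?_
      · intro s hs m _
        rw [smul_smul, has s hs, zero_smul]
      · intro y1 y2 h1 h2
        rw [smul_add, h1, h2, add_zero]
    have hxq : (Submodule.Quotient.mk x : M ⧸ (Isharp • (⊤ : Submodule 𝔄 M))) ∈
        Submodule.torsion R (M ⧸ (Isharp • (⊤ : Submodule 𝔄 M))) := by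
      obtain ⟨t, ht⟩ := hx
      refine ⟨t, ?_⟩
      rw [Submonoid.smul_def, ← Submodule.Quotient.mk_smul]
      rw [Submonoid.smul_def] at ht
      rw [ht, Submodule.Quotient.mk_zero]
    have hb0 := hb _ hxq
    rw [← Submodule.Quotient.mk_smul, Submodule.Quotient.mk_eq_zero] at hb0
    rw [mul_smul]
    exact hann _ hb0
end
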